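/- Let F be a field, n a positive integer, and A ∈ M_n(F) a nonzero matrix. Then the following are equivalent: (1) the Schur map S_A is multiplicative; (2) there exists an invertible diagonal matrix Λ ∈ M_n(F) such that A ∘ B = Λ B Λ^{-1} for all B ∈ M_n(F); (3) A_{ii} = 1 for all i and A_{ij} = A_{ik} · A_{kj} for all indices i, j, k. -/

import Mathlib

/-!
On matrix units, `A ∘ (E_ik E_kj) = (A ∘ E_ik)(A ∘ E_kj)` says exactly `A i j = A i k * A k j`.
Since `A ≠ 0`, cancelling a nonzero entry in this cocycle identity forces `A i i = 1`; then every
`A i p` is nonzero and `A i j = A i p / A j p`. So `A` is the Schur multiplier `(Λ i / Λ j)` with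
`Λ i = A i p`, which is conjugation by `diagonal Λ`, and conjugation by an invertible matrix is
multiplicative.
-/

open Matrix

namespace Matrix

variable {ι : Type*}

theorem hadamard_single [DecidableEq ι] {α : Type*} [MulZeroClass α] (A : Matrix ι ι α)
    (i j : ι) (c : α) : A ⊙ single i j c = single i j (A i j * c) := by
  ext a b
  by_cases ha : i = a <;> by_cases hb : j = b <;> simp [single, ha, hb]

theorem entry_eq_mul_of_hadamard_mul [Fintype ι] [DecidableEq ι] {α : Type*} [Semiring α]
    {A : Matrix ι ι α} (hA : ∀ B C : Matrix ι ι α, A ⊙ (B * C) = A ⊙ B * A ⊙ C)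
    (i j k : ι) : A i j = A i k * A k j := by
  have h := hA (single i k 1) (single k j 1)
  simp only [single_mul_single_same, hadamard_single, mul_one] at h
  simpa using congrFun (congrFun h i) j

theorem diag_eq_one_of_entry_eq_mul {M : Type*} [MonoidWithZero M] [IsLeftCancelMulZero M]
    {A : Matrix ι ι M} (hmul : ∀ i j k, A i j = A i k * A k j) (hA : A ≠ 0) (i : ι) :
    A i i = 1 := by
  obtain ⟨p, hp⟩ := Function.ne_iff.1 hA
  obtain ⟨q, hpq⟩ := Function.ne_iff.1 hp
  have hpi : A p i ≠ 0 := fun h ↦ hpq (by simp [hmul p q i, h])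
  exact mul_left_cancel₀ hpi (by rw [mul_one, ← hmul])

theorem diagonal_mul_mul_diagonal_inv [Fintype ι] [DecidableEq ι] {F : Type*} [Field F]
    {Λ : ι → F} (hΛ : ∀ i, Λ i ≠ 0) (B : Matrix ι ι F) :
    diagonal Λ * B * (diagonal Λ)⁻¹ = of (fun i j ↦ Λ i / Λ j) ⊙ B := by
  have hinv : (diagonal Λ)⁻¹ = diagonal Λ⁻¹ :=
    inv_eq_right_inv (by simp [diagonal_mul_diagonal, hΛ])
  ext i j
  simp only [hinv, diagonal_mul, mul_diagonal, hadamard_apply, of_apply, Pi.inv_apply]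
  ring

end Matrix

theorem schur_multiplicative_tfae_field_general (F : Type*) [Field F] (n : ℕ)
    (A : Matrix (Fin n) (Fin n) F) (hA : A ≠ 0) :
    [(∀ B C : Matrix (Fin n) (Fin n) F,
        Matrix.hadamard A (B * C) = Matrix.hadamard A B * Matrix.hadamard A C),
      (∃ Λ : Fin n → F, (∀ i, Λ i ≠ 0) ∧
        ∀ B : Matrix (Fin n) (Fin n) F,
          Matrix.hadamard A B = Matrix.diagonal Λ * B * (Matrix.diagonal Λ)⁻¹),
      ((∀ i, A i i = 1) ∧ ∀ i j k, A i j = A i k * A k j)].TFAE := by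
  tfae_have 1 → 3 := fun h ↦
    have hmul := entry_eq_mul_of_hadamard_mul h
    ⟨diag_eq_one_of_entry_eq_mul hmul hA, hmul⟩
  tfae_have 3 → 2 := by
    rintro ⟨hdiag, hmul⟩
    obtain ⟨p, -⟩ := Function.ne_iff.1 hA
    have hΛ (i : Fin n) : A i p ≠ 0 :=
      right_ne_zero_of_mul_eq_one ((hmul p p i).symm.trans (hdiag p))
    refine ⟨fun i ↦ A i p, hΛ, fun B ↦ ?_⟩
    rw [diagonal_mul_mul_diagonal_inv hΛ]
    congr 1
    ext i j
    rw [of_apply, eq_div_iff (hΛ j), ← hmul]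
  tfae_have 2 → 1 := by
    rintro ⟨Λ, hΛ, hconj⟩ B C
    have hdet : IsUnit (diagonal Λ).det := by
      simpa [det_diagonal, Finset.prod_ne_zero_iff] using hΛ
    simp only [hconj, Matrix.mul_assoc, nonsing_inv_mul_cancel_left _ _ hdet]
  tfae_finish

theorem schur_multiplicative_tfae_field (F : Type*) [Field F] (n : ℕ) (hn : 0 < n)
    (A : Matrix (Fin n) (Fin n) F) (hA : A ≠ 0) :
    [(∀ B C : Matrix (Fin n) (Fin n) F,
        Matrix.hadamard A (B * C) = Matrix.hadamard A B * Matrix.hadamard A C),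
      (∃ Λ : Fin n → F, (∀ i, Λ i ≠ 0) ∧
        ∀ B : Matrix (Fin n) (Fin n) F,
          Matrix.hadamard A B = Matrix.diagonal Λ * B * (Matrix.diagonal Λ)⁻¹),
      ((∀ i, A i i = 1) ∧ ∀ i j k, A i j = A i k * A k j)].TFAE :=
  schur_multiplicative_tfae_field_general F n A hA
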